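/- (Corollary 1.4, variational form) Let f : X → ℝ be continuous and suppose P_K(f) < 0, where P_K(f) := sup { h(μ) + ∫_X f dμ : μ ∈ 𝔐, μ(K) = 1 }. Then there exists β > 0 such that P(−β a + f) < 0, where P(g) := sup_{μ∈𝔐} ( h(μ) + ∫_X g dμ ). -/

import Mathlib

open MeasureTheory Filter Topology Set

noncomputable section

/-- A continuous flow on `X`. -/
def IsFlow {X : Type*} [TopologicalSpace X] (Φ : ℝ → X → X) : Prop :=
  Continuous (fun p : ℝ × X => Φ p.1 p.2) ∧ Φ 0 = id ∧ ∀ t s : ℝ, Φ (t + s) = Φ t ∘ Φ s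

/-- The set of flow-invariant Borel probability measures. -/
def Minv {X : Type*} [TopologicalSpace X] [MeasurableSpace X] (Φ : ℝ → X → X) :
    Set (ProbabilityMeasure X) :=
  {μ | ∀ t : ℝ, (μ : Measure X).map (Φ t) = (μ : Measure X)}

/-- The topological support of a measure. -/
def msupport {X : Type*} [TopologicalSpace X] [MeasurableSpace X] (μ : Measure X) : Set X :=
  {x | ∀ U : Set X, IsOpen U → x ∈ U → 0 < μ U}

/-- The undamped set `K`: the closure of the union of the supports of all
minimizing invariant measures. -/
def Kset {X : Type*} [TopologicalSpace X] [MeasurableSpace X] (Φ : ℝ → X → X) (a : X → ℝ) :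
    Set X :=
  closure (⋃ μ ∈ {μ ∈ Minv Φ | ∫ x, a x ∂(μ : Measure X) = 0}, msupport (μ : Measure X))

/-- Abstract pressure: `P(g) = sup over invariant measures of h(μ) + ∫ g dμ`. -/
def Pres {X : Type*} [TopologicalSpace X] [MeasurableSpace X] (Φ : ℝ → X → X)
    (h : ProbabilityMeasure X → ℝ) (g : X → ℝ) : ℝ :=
  sSup {r : ℝ | ∃ μ ∈ Minv Φ, r = h μ + ∫ x, g x ∂(μ : Measure X)}

/-- Abstract pressure on `K`: sup over invariant measures with `μ(K) = 1`. -/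
def PresK {X : Type*} [TopologicalSpace X] [MeasurableSpace X] (Φ : ℝ → X → X) (a : X → ℝ)
    (h : ProbabilityMeasure X → ℝ) (f : X → ℝ) : ℝ :=
  sSup {r : ℝ | ∃ μ ∈ Minv Φ,
    (μ : Measure X) (Kset Φ a) = 1 ∧ r = h μ + ∫ x, f x ∂(μ : Measure X)}


/-!
On the compact set `𝔐` of invariant measures, `F(μ) = h(μ) + ∫ f dμ` is upper semicontinuous and
`A(μ) = ∫ a dμ ≥ 0` is continuous. Every zero of `A` is a minimizing measure, which lives on `K`,
so `F < P_K(f) / 2` on the zero set of `A`. A compactness (penalty) argument then gives `β > 0`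
with `F - β A < P_K(f) / 2 < 0` on all of `𝔐`, and `P(-β a + f)` is the supremum of `F - β A`.
-/

theorem IsCompact.exists_pos_forall_sub_mul_lt {α : Type*} [TopologicalSpace α] {s : Set α}
    (hs : IsCompact s) {F A : α → ℝ} (hF : UpperSemicontinuousOn F s) (hA : ContinuousOn A s)
    (hA0 : ∀ x ∈ s, 0 ≤ A x) {c : ℝ} (hc : ∀ x ∈ s, A x = 0 → F x < c) :
    ∃ β > 0, ∀ x ∈ s, F x - β * A x < c := by
  have husc : ∀ n : ℕ, UpperSemicontinuousOn (fun x => F x - n * A x) s := fun n => by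
    have hnA : ContinuousOn (fun x => -(n * A x)) s := (continuousOn_const.mul hA).neg
    simpa only [sub_eq_add_neg] using hF.add hnA.upperSemicontinuousOn
  have hcover : ∀ x ∈ s, ∃ n : ℕ, F x - n * A x < c := by
    intro x hx
    rcases (hA0 x hx).eq_or_lt with hAx | hAx
    · exact ⟨0, by simpa using hc x hx hAx.symm⟩
    · obtain ⟨n, hn⟩ := exists_nat_gt ((F x - c) / A x)
      exact ⟨n, by rw [div_lt_iff₀ hAx] at hn; linarith⟩
  -- The sets `{F - n A < c}` increase with `n`, are relatively open and cover `s`.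
  obtain ⟨u, hu⟩ := (UpperSemicontinuousOn.inter_biInter_preimage_Ici_eq_empty_iff_exists_finset
    (I := univ) (c := c) hs fun n _ => husc n).1 <| by
      refine eq_empty_of_forall_notMem fun x ⟨hx, hxI⟩ => ?_
      obtain ⟨n, hn⟩ := hcover x hx
      exact (mem_iInter₂.1 hxI n (mem_univ n)).not_gt hn
  set N := u.sup Subtype.val
  refine ⟨N + 1, by positivity, fun x hx => ?_⟩
  obtain ⟨n, hnu, hn⟩ := hu x hx
  have hnN : ((n : ℕ) : ℝ) ≤ N + 1 := by exact_mod_cast (Finset.le_sup hnu).trans N.le_succ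
  nlinarith [mul_le_mul_of_nonneg_right hnN (hA0 x hx)]

theorem IsFlow.continuous_apply {X : Type*} [TopologicalSpace X] {Φ : ℝ → X → X}
    (hΦ : IsFlow Φ) (t : ℝ) : Continuous (Φ t) :=
  hΦ.1.comp (continuous_const.prodMk continuous_id)

theorem isClosed_minv {X : Type*} [TopologicalSpace X] [HasOuterApproxClosed X]
    [MeasurableSpace X] [BorelSpace X] {Φ : ℝ → X → X} (hΦ : ∀ t, Continuous (Φ t)) :
    IsClosed (Minv Φ) := by
  have hMinv : Minv Φ = ⋂ t, {μ | μ.map (hΦ t).measurable.aemeasurable = μ} := by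
    ext μ
    simp only [Minv, mem_ofPred_eq, mem_iInter, ← ProbabilityMeasure.toMeasure_injective.eq_iff,
      ProbabilityMeasure.toMeasure_map]
  rw [hMinv]
  exact isClosed_iInter fun t =>
    isClosed_eq (ProbabilityMeasure.continuous_map (hΦ t)) continuous_id

theorem msupport_eq_support {X : Type*} [TopologicalSpace X] [MeasurableSpace X]
    (μ : Measure X) : msupport μ = μ.support := by
  rw [Measure.support_eq_forall_isOpen]
  ext x
  simp only [msupport, mem_ofPred_eq]
  exact forall_congr' fun U => forall_comm

theorem measure_kset_eq_one_of_integral_eq_zero {X : Type*} [TopologicalSpace X]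
    [HereditarilyLindelofSpace X] [MeasurableSpace X] [OpensMeasurableSpace X]
    {Φ : ℝ → X → X} {a : X → ℝ} {μ : ProbabilityMeasure X} (hμ : μ ∈ Minv Φ) (hμa : ∫ x, a x ∂(μ : Measure X) = 0) :
    (μ : Measure X) (Kset Φ a) = 1 := by
  have hsub : (μ : Measure X).support ⊆ Kset Φ a := by
    rw [← msupport_eq_support]
    exact (subset_biUnion_of_mem (u := fun ν : ProbabilityMeasure X => msupport (ν : Measure X))
      (show μ ∈ {ν ∈ Minv Φ | ∫ x, a x ∂(ν : Measure X) = 0} from ⟨hμ, hμa⟩)).trans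
      subset_closure
  exact (prob_compl_eq_zero_iff isClosed_closure.measurableSet).1
    (measure_mono_null (compl_subset_compl.2 hsub) Measure.measure_compl_support)

theorem stmt10_general {X : Type*} [MetricSpace X] [CompactSpace X] [MeasurableSpace X] [BorelSpace X]
    (Φ : ℝ → X → X) (hΦ : IsFlow Φ)
    (a : X → ℝ) (ha : Continuous a) (ha0 : ∀ x, 0 ≤ a x)
    (hmin : ∃ μ ∈ Minv Φ, ∫ x, a x ∂(μ : Measure X) = 0)
    (h : ProbabilityMeasure X → ℝ)
    (husc : UpperSemicontinuousOn h (Minv Φ))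
    (f : X → ℝ) (hf : Continuous f) (hPK : PresK Φ a h f < 0) :
    ∃ β : ℝ, 0 < β ∧ Pres Φ h (fun x => -β * a x + f x) < 0 := by
  set F : ProbabilityMeasure X → ℝ := fun μ => h μ + ∫ x, f x ∂(μ : Measure X)
  set A : ProbabilityMeasure X → ℝ := fun μ => ∫ x, a x ∂(μ : Measure X)
  have hcompact : IsCompact (Minv Φ) := (isClosed_minv hΦ.continuous_apply).isCompact
  have hfcont : Continuous fun μ : ProbabilityMeasure X => ∫ x, f x ∂(μ : Measure X) :=
    ProbabilityMeasure.continuous_integral_continuousMap (⟨f, hf⟩ : C(X, ℝ))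
  have hFusc : UpperSemicontinuousOn F (Minv Φ) :=
    husc.add hfcont.continuousOn.upperSemicontinuousOn
  have hAcont : Continuous A :=
    ProbabilityMeasure.continuous_integral_continuousMap (⟨a, ha⟩ : C(X, ℝ))
  have hF_le : ∀ μ ∈ Minv Φ, A μ = 0 → F μ ≤ PresK Φ a h f := fun μ hμ hμa =>
    le_csSup ((hFusc.bddAbove_of_isCompact hcompact).mono
      (by rintro r ⟨ν, hν, -, rfl⟩; exact ⟨ν, hν, rfl⟩))
      ⟨μ, hμ, measure_kset_eq_one_of_integral_eq_zero hμ hμa, rfl⟩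
  obtain ⟨β, hβ, hβF⟩ := hcompact.exists_pos_forall_sub_mul_lt hFusc hAcont.continuousOn
    (fun μ _ => integral_nonneg ha0) (c := PresK Φ a h f / 2)
    fun μ hμ hμa => by linarith [hF_le μ hμ hμa]
  refine ⟨β, hβ, (?_ : _ ≤ PresK Φ a h f / 2).trans_lt (by linarith)⟩
  obtain ⟨μ₀, hμ₀, -⟩ := hmin
  refine csSup_le ⟨_, μ₀, hμ₀, rfl⟩ ?_
  rintro r ⟨μ, hμ, rfl⟩
  have hint : ∀ g : X → ℝ, Continuous g → Integrable g (μ : Measure X) := fun g hg =>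
    hg.integrable_of_hasCompactSupport (HasCompactSupport.of_compactSpace g)
  rw [integral_add ((hint a ha).const_mul _) (hint f hf), integral_const_mul]
  linarith [hβF μ hμ]

/-- Corollary 1.4, variational form: if `P_K(f) < 0` then `P(-βa + f) < 0`
for some large enough `β > 0`. -/
theorem stmt10 {X : Type*} [MetricSpace X] [CompactSpace X] [MeasurableSpace X] [BorelSpace X]
    (Φ : ℝ → X → X) (hΦ : IsFlow Φ)
    (a : X → ℝ) (ha : Continuous a) (ha0 : ∀ x, 0 ≤ a x)
    (hmin : ∃ μ ∈ Minv Φ, ∫ x, a x ∂(μ : Measure X) = 0)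
    (h : ProbabilityMeasure X → ℝ)
    (hbd : ∃ C : ℝ, ∀ μ ∈ Minv Φ, |h μ| ≤ C)
    (husc : UpperSemicontinuousOn h (Minv Φ))
    (f : X → ℝ) (hf : Continuous f) (hPK : PresK Φ a h f < 0) :
    ∃ β : ℝ, 0 < β ∧ Pres Φ h (fun x => -β * a x + f x) < 0 :=
  stmt10_general Φ hΦ a ha ha0 hmin h husc f hf hPK
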